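/- Lemma 4: For every probability measure μ̂ on (M̂, Ŝ), every n ≥ 1, every j ∈ ℕ₀ and every Borel set C ⊆ I, (Tⁿμ̂)_j(C) = ∑_{ξ_n≥0} ⋯ ∑_{ξ_1≥0} p_{ξ_nξ_{n-1}}·⋯·p_{ξ_2ξ_1}·p_{ξ_1 j}·μ_{ξ_n}((f_j∘f_{ξ_1}∘⋯∘f_{ξ_{n-1}})^{-1}(C)) (for n = 1 the composition reduces to f_j). -/

import Mathlib

open MeasureTheory Filter Topology Set
open scoped BigOperators

noncomputable section

/-- Tail sum ∑_{j ≥ i} p_j. -/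
def tailSum (p : ℕ → ℝ) (i : ℕ) : ℝ := ∑' j : ℕ, p (i + j)

/-- Invariant distribution m_i = (∑_{j≥i} p_j)/(1+E). -/
def mdist (p : ℕ → ℝ) (E : ℝ) (i : ℕ) : ℝ := tailSum p i / (1 + E)

/-- Transition matrix entries: p_{0j} = p_j, p_{(k+1)k} = 1, else 0. -/
def Ptrans (p : ℕ → ℝ) (i j : ℕ) : ℝ := if i = 0 then p j else if i = j + 1 then 1 else 0

/-- Reversed transition matrix q_{ij} = (m_j / m_i) · p_{ji}. -/
def qtrans (p : ℕ → ℝ) (E : ℝ) (i j : ℕ) : ℝ := mdist p E j / mdist p E i * Ptrans p j i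

/-- Cylinder set of length n determined by the first n values of ξ. -/
def cyl (ξ : ℕ → ℕ) (n : ℕ) : Set (ℕ → ℕ) := {ω | ∀ i < n, ω i = ξ i}

/-- Probability assigned by ℙ⁻ to the cylinder [ξ₀,…,ξ_{n-1}]. -/
def cylProbQ (p : ℕ → ℝ) (E : ℝ) (ξ : ℕ → ℕ) (n : ℕ) : ℝ :=
  mdist p E (ξ 0) * ∏ i ∈ Finset.range (n - 1), qtrans p E (ξ i) (ξ (i + 1))

/-- Probability assigned by ℙ to the cylinder [ξ₀,…,ξ_{n-1}]. -/
def cylProbP (p : ℕ → ℝ) (E : ℝ) (ξ : ℕ → ℕ) (n : ℕ) : ℝ :=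
  mdist p E (ξ 0) * ∏ i ∈ Finset.range (n - 1), Ptrans p (ξ i) (ξ (i + 1))

/-- The family f₀ = g, f_k = f for k ≥ 1. -/
def fseq (a b : ℝ) (g f : Set.Icc a b → Set.Icc a b) : ℕ → Set.Icc a b → Set.Icc a b :=
  fun k => if k = 0 then g else f

/-- itf fI ξ n = f_{ξ₀} ∘ f_{ξ₁} ∘ ⋯ ∘ f_{ξ_{n-1}}. -/
def itf (a b : ℝ) (fI : ℕ → Set.Icc a b → Set.Icc a b) (ξ : ℕ → ℕ) :
    ℕ → Set.Icc a b → Set.Icc a b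
  | 0 => id
  | n + 1 => fun x => itf a b fI ξ n (fI (ξ n) x)

/-- itfRev fI a n = f_{a_{n-1}} ∘ ⋯ ∘ f_{a_0}  (i.e. f_{a_n}∘⋯∘f_{a_1} with 1-based indexing). -/
def itfRev (a b : ℝ) (fI : ℕ → Set.Icc a b → Set.Icc a b) (c : ℕ → ℕ) :
    ℕ → Set.Icc a b → Set.Icc a b
  | 0 => id
  | n + 1 => fun x => fI (c n) (itfRev a b fI c n x)

/-- I_ξ = ⋂_{n ≥ 1} (f_{ξ₀}∘⋯∘f_{ξ_{n-1}})(I). -/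
def Iset (a b : ℝ) (fI : ℕ → Set.Icc a b → Set.Icc a b) (ξ : ℕ → ℕ) : Set (Set.Icc a b) :=
  ⋂ n : ℕ, itf a b fI ξ (n + 1) '' Set.univ

/-- S = {ξ : diam I_ξ = 0}. -/
def Sset (a b : ℝ) (fI : ℕ → Set.Icc a b → Set.Icc a b) : Set (ℕ → ℕ) :=
  {ξ | EMetric.diam (Iset a b fI ξ) = 0}

/-- The j-th sliceM of a measure on ℕ × I:  μ_j(C) = μ̂({j} × C). -/
def sliceM (a b : ℝ) (μ : Measure (ℕ × Set.Icc a b)) (k : ℕ) : Measure (Set.Icc a b) :=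
  Measure.map Prod.snd (μ.restrict ({k} ×ˢ (Set.univ : Set (Set.Icc a b))))

/-- The Markov operator T:  (Tμ̂)({j}×C) = μ_{j+1}(f_j⁻¹ C) + p_j·μ₀(f_j⁻¹ C). -/
def TOp (a b : ℝ) (p : ℕ → ℝ) (fI : ℕ → Set.Icc a b → Set.Icc a b)
    (μ : Measure (ℕ × Set.Icc a b)) : Measure (ℕ × Set.Icc a b) :=
  Measure.sum fun j =>
    Measure.map (fun x => (j, fI j x))
      (sliceM a b μ (j + 1) + ENNReal.ofReal (p j) • sliceM a b μ 0)

/-- Extend ξ : Fin n → ℕ to ℕ → ℕ by 0. -/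
def padSeq {n : ℕ} (ξ : Fin n → ℕ) : ℕ → ℕ := fun i => if h : i < n then ξ ⟨i, h⟩ else 0

/-- S_nˣ = {ξ : x ∈ I_ξⁿ}. -/
def SnX (a b : ℝ) (fI : ℕ → Set.Icc a b → Set.Icc a b) (x : Set.Icc a b) (n : ℕ) :
    Set (ℕ → ℕ) :=
  {ξ | x ∈ itf a b fI ξ n '' Set.univ}

/-- Σ_n^W = {ω : σ^{iN}(ω) ∉ W for i = 0,…,n-1}, for W the cylinder [ξ₀,…,ξ_{N-1}]. -/
def SigW (ξ : ℕ → ℕ) (N n : ℕ) : Set (ℕ → ℕ) :=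
  {ω | ∀ i < n, ¬ (∀ k < N, ω (i * N + k) = ξ k)}

open Classical in
/-- The block-replacement map H_n: replace every length-N block equal to (ξ₀,…,ξ_{N-1})
by (η₀,…,η_{N-1}). -/
noncomputable def Hn (ξ η : ℕ → ℕ) (N : ℕ) (c : ℕ → ℕ) : ℕ → ℕ :=
  fun i => if (∀ k < N, c (i / N * N + k) = ξ k) then η (i % N) else c i

/-- The splitting condition. -/
def Splitting (a b : ℝ) (fI : ℕ → Set.Icc a b → Set.Icc a b) (P : Measure (ℕ → ℕ)) : Prop :=
  ∃ (l r : ℕ) (c d : ℕ → ℕ), 1 ≤ l ∧ 1 ≤ r ∧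
    0 < P (cyl c l) ∧ 0 < P (cyl d r) ∧ c (l - 1) = d (r - 1) ∧
    (itfRev a b fI c l '' Set.univ) ∩ (itfRev a b fI d r '' Set.univ) = ∅

/-! Since the only transitions into `j` come from `0` (with probability `p j`) and from `j + 1`
(with probability `1`), one step of `T` reads `(Tν)_j(C) = ∑ᵢ p_{ij} ν_i(f_j⁻¹ C)`. Iterating, by
induction on `n` and splitting a path of length `n + 1` into its first state and the remaining path,
gives the formula. -/

lemma Ptrans_nonneg {p : ℕ → ℝ} (hp : ∀ n, 0 ≤ p n) (i j : ℕ) : 0 ≤ Ptrans p i j := by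
  unfold Ptrans
  split_ifs
  exacts [hp j, zero_le_one, le_rfl]

lemma tsum_ofReal_Ptrans_mul (p : ℕ → ℝ) (m : ℕ → ENNReal) (j : ℕ) :
    ∑' i, ENNReal.ofReal (Ptrans p i j) * m i = m (j + 1) + ENNReal.ofReal (p j) * m 0 := by
  have hzero : ∀ i ∉ ({0, j + 1} : Finset ℕ), ENNReal.ofReal (Ptrans p i j) * m i = 0 := by
    intro i hi
    simp only [Finset.mem_insert, Finset.mem_singleton, not_or] at hi
    simp [Ptrans, hi.1, hi.2]
  rw [tsum_eq_sum hzero, Finset.sum_pair (Nat.succ_ne_zero j).symm]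
  simp [Ptrans, add_comm]

lemma padSeq_cons_zero {n : ℕ} (i : ℕ) (ξ : Fin n → ℕ) : padSeq (Fin.cons i ξ) 0 = i := by
  simp [padSeq]

lemma padSeq_cons_succ {n : ℕ} (i : ℕ) (ξ : Fin n → ℕ) (k : ℕ) :
    padSeq (Fin.cons i ξ) (k + 1) = padSeq ξ k := by
  unfold padSeq
  by_cases h : k < n
  · rw [dif_pos (Nat.succ_lt_succ h), dif_pos h]
    exact Fin.cons_succ (α := fun _ => ℕ) i ξ ⟨k, h⟩
  · rw [dif_neg (by omega), dif_neg h]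

lemma Ptrans_mul_prod_padSeq_cons (p : ℕ → ℝ) (i j : ℕ) {n : ℕ} (ξ : Fin (n + 1) → ℕ) :
    Ptrans p (padSeq (Fin.cons i ξ) 0) j *
        ∏ k ∈ Finset.range (n + 1),
          Ptrans p (padSeq (Fin.cons i ξ) (k + 1)) (padSeq (Fin.cons i ξ) k) =
      Ptrans p i j *
        (Ptrans p (padSeq ξ 0) i *
          ∏ k ∈ Finset.range n, Ptrans p (padSeq ξ (k + 1)) (padSeq ξ k)) := by
  simp only [Finset.prod_range_succ', padSeq_cons_zero, padSeq_cons_succ]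
  ring

section Interval

variable {a b : ℝ}

lemma sliceM_apply (ν : Measure (ℕ × Set.Icc a b)) (k : ℕ) {C : Set (Set.Icc a b)}
    (hC : MeasurableSet C) : sliceM a b ν k C = ν ({k} ×ˢ C) := by
  rw [sliceM, Measure.map_apply measurable_snd hC, Measure.restrict_apply (measurable_snd hC)]
  congr 1
  ext ⟨i, x⟩
  simp [and_comm]

lemma sliceM_TOp_apply {p : ℕ → ℝ} {fI : ℕ → Set.Icc a b → Set.Icc a b}
    (hfI : ∀ k, Measurable (fI k)) (ν : Measure (ℕ × Set.Icc a b)) (j : ℕ)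
    {C : Set (Set.Icc a b)} (hC : MeasurableSet C) :
    sliceM a b (TOp a b p fI ν) j C =
      ∑' i, ENNReal.ofReal (Ptrans p i j) * sliceM a b ν i (fI j ⁻¹' C) := by
  have hjC : MeasurableSet ({j} ×ˢ C : Set (ℕ × Set.Icc a b)) :=
    (measurableSet_singleton j).prod hC
  have hpre : ∀ k, (fun x => ((k, fI k x) : ℕ × Set.Icc a b)) ⁻¹' ({j} ×ˢ C) =
      if k = j then fI j ⁻¹' C else ∅ := by
    intro k
    split_ifs with hkj
    · subst hkj; ext x; simp
    · ext x; simp [hkj]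
  rw [tsum_ofReal_Ptrans_mul, sliceM_apply _ _ hC, TOp, Measure.sum_apply _ hjC,
    tsum_eq_single j fun k hk => ?_]
  · rw [Measure.map_apply (measurable_const.prodMk (hfI j)) hjC, hpre, if_pos rfl]
    rfl
  · rw [Measure.map_apply (measurable_const.prodMk (hfI k)) hjC, hpre, if_neg hk,
      measure_empty]

lemma itf_succ_apply' (fI : ℕ → Set.Icc a b → Set.Icc a b) (c : ℕ → ℕ) (n : ℕ)
    (x : Set.Icc a b) :
    itf a b fI c (n + 1) x = fI (c 0) (itf a b fI (fun k => c (k + 1)) n x) := by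
  induction n generalizing x with
  | zero => rfl
  | succ n ih => exact ih (fI (c (n + 1)) x)

lemma itf_padSeq_cons_preimage (fI : ℕ → Set.Icc a b → Set.Icc a b) (i j : ℕ) {n : ℕ}
    (ξ : Fin n → ℕ) (m : ℕ) (C : Set (Set.Icc a b)) :
    itf a b fI (fun k => if k = 0 then j else padSeq (Fin.cons i ξ) (k - 1)) (m + 1) ⁻¹' C =
      itf a b fI (fun k => if k = 0 then i else padSeq ξ (k - 1)) m ⁻¹' (fI j ⁻¹' C) := by
  have hshift : (fun k => if k + 1 = 0 then j else padSeq (Fin.cons i ξ) (k + 1 - 1)) =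
      fun k => if k = 0 then i else padSeq ξ (k - 1) := by
    funext k
    cases k <;> simp [padSeq_cons_zero, padSeq_cons_succ]
  ext x
  simp only [Set.mem_preimage, itf_succ_apply', hshift, if_pos]

theorem sliceM_iterate_TOp_apply {p : ℕ → ℝ} (hp : ∀ n, 0 ≤ p n)
    {fI : ℕ → Set.Icc a b → Set.Icc a b} (hfI : ∀ k, Measurable (fI k))
    (μ : Measure (ℕ × Set.Icc a b)) {n : ℕ} (hn : 1 ≤ n) (j : ℕ) {C : Set (Set.Icc a b)}
    (hC : MeasurableSet C) :
    sliceM a b ((TOp a b p fI)^[n] μ) j C =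
      ∑' ξ : Fin n → ℕ,
        ENNReal.ofReal (Ptrans p (padSeq ξ 0) j *
            ∏ k ∈ Finset.range (n - 1), Ptrans p (padSeq ξ (k + 1)) (padSeq ξ k)) *
          sliceM a b μ (padSeq ξ (n - 1))
            ((itf a b fI (fun i => if i = 0 then j else padSeq ξ (i - 1)) n) ⁻¹' C) := by
  induction n, hn using Nat.le_induction generalizing j C with
  | base =>
    rw [Function.iterate_one, sliceM_TOp_apply hfI μ j hC,
      ← (Equiv.funUnique (Fin 1) ℕ).symm.tsum_eq]
    refine tsum_congr fun i => ?_
    simp [padSeq, Equiv.funUnique, itf]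
  | succ n _ ih =>
    obtain ⟨m, rfl⟩ : ∃ m, n = m + 1 := ⟨n - 1, by omega⟩
    rw [Function.iterate_succ_apply', sliceM_TOp_apply hfI _ j hC,
      ← (Fin.consEquiv fun _ => ℕ).tsum_eq, ENNReal.tsum_prod']
    refine tsum_congr fun i => ?_
    rw [ih i (hfI j hC), ← ENNReal.tsum_mul_left]
    refine tsum_congr fun ξ => ?_
    rw [show (Fin.consEquiv fun _ => ℕ) (i, ξ) = Fin.cons i ξ from rfl, Nat.add_sub_cancel,
      Nat.add_sub_cancel, Ptrans_mul_prod_padSeq_cons, ENNReal.ofReal_mul (Ptrans_nonneg hp i j),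
      itf_padSeq_cons_preimage, padSeq_cons_succ, mul_assoc]

end Interval

/-- The path ξ₁,…,ξ_n of the paper is `ξ : Fin n → ℕ`, with `ξ k` standing for ξ_{k+1}. -/
theorem stmt7_general (a b : ℝ)
    (f g : Set.Icc a b → Set.Icc a b) (hfc : Continuous f) (hgc : Continuous g)
    (p : ℕ → ℝ)
    (hp : ∀ n, 0 ≤ p n)
    (μ : Measure (ℕ × Set.Icc a b))
    (n : ℕ) (hn : 1 ≤ n) (j : ℕ) (C : Set (Set.Icc a b)) (hC : MeasurableSet C) :
    sliceM a b ((TOp a b p (fseq a b g f))^[n] μ) j C =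
      ∑' ξ : Fin n → ℕ,
        ENNReal.ofReal (Ptrans p (padSeq ξ 0) j *
            ∏ k ∈ Finset.range (n - 1), Ptrans p (padSeq ξ (k + 1)) (padSeq ξ k)) *
          sliceM a b μ (padSeq ξ (n - 1))
            ((itf a b (fseq a b g f) (fun i => if i = 0 then j else padSeq ξ (i - 1)) n) ⁻¹' C) := by
  have hfI (k : ℕ) : Measurable (fseq a b g f k) := by
    unfold fseq
    split_ifs
    exacts [hgc.measurable, hfc.measurable]
  exact sliceM_iterate_TOp_apply hp hfI μ hn j hC

/-- Lemma 4: explicit formula for (Tⁿμ̂)_j(C) as a sum over all paths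
ξ₁,…,ξ_n (here ξ : Fin n → ℕ with ξ k standing for ξ_{k+1}). -/
theorem stmt7 (a b : ℝ) (hab : a < b)
    (f g : Set.Icc a b → Set.Icc a b) (hfc : Continuous f) (hgc : Continuous g)
    (p : ℕ → ℝ)
    (hp : ∀ n, 0 ≤ p n) (hp1 : HasSum p 1) (hp0 : 0 < p 0)
    (hmean : Summable fun n : ℕ => (n : ℝ) * p n)
    (hsupp : ∀ N : ℕ, ∃ n, N ≤ n ∧ 0 < p n)
    (μ : Measure (ℕ × Set.Icc a b)) [IsProbabilityMeasure μ]
    (n : ℕ) (hn : 1 ≤ n) (j : ℕ) (C : Set (Set.Icc a b)) (hC : MeasurableSet C) :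
    sliceM a b ((TOp a b p (fseq a b g f))^[n] μ) j C =
      ∑' ξ : Fin n → ℕ,
        ENNReal.ofReal (Ptrans p (padSeq ξ 0) j *
            ∏ k ∈ Finset.range (n - 1), Ptrans p (padSeq ξ (k + 1)) (padSeq ξ k)) *
          sliceM a b μ (padSeq ξ (n - 1))
            ((itf a b (fseq a b g f) (fun i => if i = 0 then j else padSeq ξ (i - 1)) n) ⁻¹' C) :=
  stmt7_general a b f g hfc hgc p hp μ n hn j C hC

end
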